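/- Let Λ : ℝ → ℝ be twice differentiable on [0,1] with bounded second derivative on [0,1], and set Z = ∫₀^1 Λ(s) ds. Let U₁, …, Uₙ be i.i.d. Uniform(0,1) with order statistics U₍₁₎ ≤ ⋯ ≤ U₍ₙ₎, U₍₀₎ = 0, U₍ₙ₊₁₎ = 1, and let Ẑ_QIS = (1/2)·Σ_{i=1}^{n+1} (U₍ᵢ₎ − U₍ᵢ₋₁₎)·(Λ(U₍ᵢ₋₁₎) + Λ(U₍ᵢ₎)). Then there exists a constant M (depending only on the bound on |Λ''|) such that for all n ≥ 1, E[(Z − Ẑ_QIS)²] ≤ M / n⁴. -/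

import Mathlib

open MeasureTheory


open MeasureTheory

/-- The augmented order statistics of `u : Fin n → ℝ`:
`orderStatAug n u i = U₍ᵢ₎` for `1 ≤ i ≤ n` (the `i`-th smallest value,
obtained by sorting), with the convention `U₍₀₎ = 0` and `U₍ₙ₊₁₎ = 1`. -/
noncomputable def orderStatAug (n : ℕ) (u : Fin n → ℝ) : ℕ → ℝ := fun i =>
  if i = 0 then 0
  else if i = n + 1 then 1
  else ((List.ofFn u).mergeSort (fun a b => a ≤ b)).getD (i - 1) 0

/-- The spacings `Z_i = U₍ᵢ₎ − U₍ᵢ₋₁₎` of the augmented order statistics. -/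
noncomputable def spacing (n : ℕ) (u : Fin n → ℝ) (i : ℕ) : ℝ :=
  orderStatAug n u i - orderStatAug n u (i - 1)

/-- The joint law of `n` i.i.d. `Uniform(0,1)` random variables: the product
of Lebesgue measures on `[0,1]ⁿ`. -/
noncomputable def iidUniform (n : ℕ) : Measure (Fin n → ℝ) :=
  Measure.pi fun _ : Fin n => volume.restrict (Set.Icc (0:ℝ) 1)

/-- The quantile importance sampling (QIS, trapezoid) estimator
`Ẑ_QIS = (1/2)·Σ_{i=1}^{n+1} (U₍ᵢ₎ − U₍ᵢ₋₁₎)·(Λ(U₍ᵢ₋₁₎) + Λ(U₍ᵢ₎))`. -/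
noncomputable def qis (Λ : ℝ → ℝ) (n : ℕ) (u : Fin n → ℝ) : ℝ :=
  (1 / 2) * ∑ i ∈ Finset.range (n + 1),
    (orderStatAug n u (i + 1) - orderStatAug n u i)
      * (Λ (orderStatAug n u i) + Λ (orderStatAug n u (i + 1)))

/-!
Pointwise, the trapezoid rule on a spacing of length `Δ` errs by at most `C Δ³ / 12`, so by
Cauchy–Schwarz and `∑ Δ = 1` the squared error is at most `(C / 12)² ∑ Δ⁵`. Each spacing is at
most the gap from its left endpoint (`0` or a sample point) to the next sample point to its
right (or `1`). The gap after a sample point exceeds `s` only if the `n - 1` other points avoid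
an interval of length `s`, which has probability `(1 - s)ⁿ⁻¹`; the layer-cake formula and a Beta
integral then bound its fifth moment by `5! / n⁵`. Summing the `n + 1` gaps gives `O(n⁻⁴)`.
-/

open Set
open scoped Nat

section OrderStatistics

variable {n : ℕ} {u : Fin n → ℝ}

lemma mergeSort_ofFn_eq (u : Fin n → ℝ) :
    (List.ofFn u).mergeSort (fun a b => a ≤ b) = List.ofFn (u ∘ Tuple.sort u) :=
  ((List.mergeSort_perm _ _).trans ((Tuple.sort u).ofFn_comp_perm u).symm).eq_of_pairwise'
    (List.pairwise_mergeSort' _ _) (Tuple.monotone_sort u).sortedLE_ofFn.pairwise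

@[simp]
lemma orderStatAug_zero (u : Fin n → ℝ) : orderStatAug n u 0 = 0 := rfl

@[simp]
lemma orderStatAug_last (u : Fin n → ℝ) : orderStatAug n u (n + 1) = 1 := by
  simp [orderStatAug]

lemma orderStatAug_succ (u : Fin n → ℝ) (i : Fin n) :
    orderStatAug n u (i + 1) = u (Tuple.sort u i) := by
  simp [orderStatAug, mergeSort_ofFn_eq, i.isLt.ne]

lemma orderStatAug_mem_Icc (hu : ∀ k, u k ∈ Icc (0 : ℝ) 1) {i : ℕ} (hi : i ≤ n + 1) :
    orderStatAug n u i ∈ Icc (0 : ℝ) 1 := by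
  rcases i with _ | i
  · simp
  rcases (Nat.succ_le_succ_iff.1 hi).eq_or_lt with rfl | hi
  · simp
  · exact orderStatAug_succ u ⟨i, hi⟩ ▸ hu _

lemma orderStatAug_monotoneOn (hu : ∀ k, u k ∈ Icc (0 : ℝ) 1) :
    MonotoneOn (orderStatAug n u) (Iic (n + 1)) := by
  intro i hi j hj hij
  rcases i with _ | i
  · exact (orderStatAug_mem_Icc hu hj).1
  rcases (show j ≤ n + 1 from hj).eq_or_lt with rfl | hj
  · simpa using (orderStatAug_mem_Icc hu hi).2
  obtain ⟨j, rfl⟩ : ∃ j', j = j' + 1 := ⟨j - 1, by omega⟩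
  rw [orderStatAug_succ u ⟨i, by omega⟩, orderStatAug_succ u ⟨j, by omega⟩]
  exact Tuple.monotone_sort u (Fin.mk_le_mk.2 (by omega))

lemma le_orderStatAug_or_orderStatAug_succ_le (hu : ∀ k, u k ∈ Icc (0 : ℝ) 1) (k : Fin n)
    {i : ℕ} (hi : i ≤ n) : u k ≤ orderStatAug n u i ∨ orderStatAug n u (i + 1) ≤ u k := by
  have hk : u k = orderStatAug n u (((Tuple.sort u).symm k : ℕ) + 1) := by
    rw [orderStatAug_succ, Equiv.apply_symm_apply]
  have hp := ((Tuple.sort u).symm k).isLt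
  generalize ((Tuple.sort u).symm k : ℕ) = p at hk hp
  have hmono := orderStatAug_monotoneOn hu
  rcases le_or_gt (p + 1) i with h | h
  · exact .inl (hk ▸ hmono (by simp; omega) (by simp; omega) h)
  · exact .inr (hk ▸ hmono (by simp; omega) (by simp; omega) h)

lemma sum_orderStatAug_sub (u : Fin n → ℝ) :
    ∑ i ∈ Finset.range (n + 1), (orderStatAug n u (i + 1) - orderStatAug n u i) = 1 := by
  rw [Finset.sum_range_sub (orderStatAug n u)]; simp

end OrderStatistics

section Gaps

variable {n : ℕ}

/-- The first sample point strictly to the right of `t`, or `1` if there is none. -/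
noncomputable def nextPoint (u : Fin n → ℝ) (t : ℝ) : ℝ :=
  Finset.univ.fold min 1 fun k => if t < u k then u k else 1

noncomputable def gapAfter (u : Fin n → ℝ) (t : ℝ) : ℝ := nextPoint u t - t

lemma gapAfter_mem_Icc (u : Fin n → ℝ) {t : ℝ} (ht : t ∈ Icc (0 : ℝ) 1) :
    gapAfter u t ∈ Icc (0 : ℝ) 1 := by
  have hle : t ≤ nextPoint u t := (Finset.le_fold_min _).2 ⟨ht.2, fun k _ => by
    split_ifs with h
    exacts [h.le, ht.2]⟩
  have hge : nextPoint u t ≤ 1 := (Finset.fold_min_le _).2 (.inl le_rfl)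
  exact ⟨sub_nonneg.2 hle, by unfold gapAfter; linarith [ht.1]⟩

lemma forall_notMem_Ioc_of_lt_gapAfter {u : Fin n → ℝ} {t s : ℝ} (h : s < gapAfter u t) :
    t + s < 1 ∧ ∀ k, u k ∉ Ioc t (t + s) := by
  obtain ⟨h1, hk⟩ := (Finset.lt_fold_min _).1 (show t + s < nextPoint u t by
    unfold gapAfter at h; linarith)
  refine ⟨h1, fun k hmem => ?_⟩
  have := hk k (Finset.mem_univ k)
  rw [if_pos hmem.1] at this
  linarith [hmem.2]

lemma orderStatAug_succ_le_nextPoint {u : Fin n → ℝ} (hu : ∀ k, u k ∈ Icc (0 : ℝ) 1) {i : ℕ}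
    (hi : i ≤ n) : orderStatAug n u (i + 1) ≤ nextPoint u (orderStatAug n u i) := by
  refine (Finset.le_fold_min _).2 ⟨(orderStatAug_mem_Icc hu (by omega)).2, fun k _ => ?_⟩
  split_ifs with h
  · exact ((le_orderStatAug_or_orderStatAug_succ_le hu k hi).resolve_left h.not_ge)
  · exact (orderStatAug_mem_Icc hu (by omega)).2

/-- Each spacing is dominated by the gap after its left endpoint, and the left endpoints are `0`
and the sample points. -/
lemma sum_spacing_pow_le {u : Fin n → ℝ} (hu : ∀ k, u k ∈ Icc (0 : ℝ) 1) (p : ℕ) :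
    ∑ i ∈ Finset.range (n + 1), (orderStatAug n u (i + 1) - orderStatAug n u i) ^ p
      ≤ gapAfter u 0 ^ p + ∑ k, gapAfter u (u k) ^ p := by
  calc ∑ i ∈ Finset.range (n + 1), (orderStatAug n u (i + 1) - orderStatAug n u i) ^ p
      ≤ ∑ i ∈ Finset.range (n + 1), gapAfter u (orderStatAug n u i) ^ p := by
        refine Finset.sum_le_sum fun i hi => pow_le_pow_left₀ ?_ ?_ p
        · have := Finset.mem_range.1 hi
          exact sub_nonneg.2 (orderStatAug_monotoneOn hu (by simp; omega) (by simp; omega)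
            (Nat.le_succ i))
        · exact sub_le_sub_right (orderStatAug_succ_le_nextPoint hu (by simpa [Nat.lt_succ_iff]
            using hi)) _
    _ = gapAfter u 0 ^ p + ∑ k, gapAfter u (u k) ^ p := by
        rw [Finset.sum_range_succ', add_comm, orderStatAug_zero, ← Fin.sum_univ_eq_sum_range
          (fun i => gapAfter u (orderStatAug n u (i + 1)) ^ p)]
        simp only [orderStatAug_succ]
        rw [Equiv.sum_comp (Tuple.sort u) (fun k => gapAfter u (u k) ^ p)]

end Gaps

section Trapezoid

variable {f f' f'' : ℝ → ℝ} {C : ℝ}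

lemma abs_integral_sub_trapezoid_le {a b : ℝ} (hab : a ≤ b)
    (hf : ∀ x ∈ Icc a b, HasDerivWithinAt f (f' x) (Icc a b) x)
    (hf' : ∀ x ∈ Icc a b, HasDerivWithinAt f' (f'' x) (Icc a b) x)
    (hC : ∀ x ∈ Icc a b, |f'' x| ≤ C) :
    |(∫ x in a..b, f x) - (b - a) / 2 * (f a + f b)| ≤ C / 12 * (b - a) ^ 3 := by
  rcases hab.eq_or_lt with rfl | hab
  · simp
  have hd : EqOn (derivWithin f (Icc a b)) f' (Icc a b) := fun x hx =>
    (hf x hx).derivWithin (uniqueDiffOn_Icc hab x hx)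
  have hdd : ∀ x, |iteratedDerivWithin 2 f (Icc a b) x| ≤ C := by
    intro x
    rw [iteratedDerivWithin_succ, iteratedDerivWithin_one]
    by_cases hx : x ∈ Icc a b
    · rw [derivWithin_congr hd (hd hx), (hf' x hx).derivWithin (uniqueDiffOn_Icc hab x hx)]
      exact hC x hx
    · rw [derivWithin_zero_of_notMem_closure (by rwa [closure_Icc]), abs_zero]
      exact (abs_nonneg _).trans (hC a (left_mem_Icc.2 hab.le))
  have h := trapezoidal_error_le (N := 1) (ζ := C)
    (by rw [uIcc_of_le hab.le]; exact fun x hx => (hf x hx).differentiableWithinAt)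
    (by rw [uIcc_of_le hab.le]
        exact fun x hx => ((hf' x hx).differentiableWithinAt).congr (fun y hy => hd hy) (hd hx))
    (by rw [uIcc_of_le hab.le]; exact hdd) one_pos
  rw [trapezoidal_error, trapezoidal_integral_one, abs_sub_comm, abs_of_pos (sub_pos.2 hab)] at h
  convert h using 1
  ring

lemma abs_integral_sub_sum_trapezoid_le {x : ℕ → ℝ} {N : ℕ} (hx : MonotoneOn x (Iic N))
    (hf : ∀ y ∈ Icc (x 0) (x N), HasDerivWithinAt f (f' y) (Icc (x 0) (x N)) y)
    (hf' : ∀ y ∈ Icc (x 0) (x N), HasDerivWithinAt f' (f'' y) (Icc (x 0) (x N)) y)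
    (hC : ∀ y ∈ Icc (x 0) (x N), |f'' y| ≤ C) :
    |(∫ y in x 0..x N, f y)
        - ∑ i ∈ Finset.range N, (x (i + 1) - x i) / 2 * (f (x i) + f (x (i + 1)))|
      ≤ C / 12 * ∑ i ∈ Finset.range N, (x (i + 1) - x i) ^ 3 := by
  have hsub : ∀ i < N, Icc (x i) (x (i + 1)) ⊆ Icc (x 0) (x N) := fun i hi =>
    Icc_subset_Icc (hx (by simp) (by simp; omega) (Nat.zero_le i))
      (hx (by simp; omega) (by simp) hi)
  have hle : ∀ i < N, x i ≤ x (i + 1) := fun i hi =>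
    hx (by simp; omega) (by simp; omega) (Nat.le_succ i)
  have hint : ∀ i < N, IntervalIntegrable f volume (x i) (x (i + 1)) := fun i hi =>
    ContinuousOn.intervalIntegrable_of_Icc (hle i hi) fun y hy =>
      ((hf y (hsub i hi hy)).mono (hsub i hi)).continuousWithinAt
  rw [← intervalIntegral.sum_integral_adjacent_intervals hint, ← Finset.sum_sub_distrib,
    Finset.mul_sum]
  refine (Finset.abs_sum_le_sum_abs _ _).trans (Finset.sum_le_sum fun i hi => ?_)
  have hi := Finset.mem_range.1 hi
  exact abs_integral_sub_trapezoid_le (hle i hi)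
    (fun y hy => (hf y (hsub i hi hy)).mono (hsub i hi))
    (fun y hy => (hf' y (hsub i hi hy)).mono (hsub i hi)) (fun y hy => hC y (hsub i hi hy))

end Trapezoid

lemma sq_sum_pow_three_le {ι : Type*} (s : Finset ι) {d : ι → ℝ} (hd : ∀ i ∈ s, 0 ≤ d i) :
    (∑ i ∈ s, d i ^ 3) ^ 2 ≤ (∑ i ∈ s, d i) * ∑ i ∈ s, d i ^ 5 :=
  Finset.sum_sq_le_sum_mul_sum_of_sq_le_mul s hd (fun i hi => pow_nonneg (hd i hi) 5)
    fun i _ => le_of_eq (by ring)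

lemma sq_integral_sub_qis_le {Λ Λd Λdd : ℝ → ℝ} {C : ℝ}
    (hΛ : ∀ x ∈ Icc (0 : ℝ) 1, HasDerivWithinAt Λ (Λd x) (Icc (0 : ℝ) 1) x)
    (hΛd : ∀ x ∈ Icc (0 : ℝ) 1, HasDerivWithinAt Λd (Λdd x) (Icc (0 : ℝ) 1) x)
    (hC : ∀ x ∈ Icc (0 : ℝ) 1, |Λdd x| ≤ C) {n : ℕ} {u : Fin n → ℝ}
    (hu : ∀ k, u k ∈ Icc (0 : ℝ) 1) :
    ((∫ s in (0 : ℝ)..1, Λ s) - qis Λ n u) ^ 2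
      ≤ (C / 12) ^ 2 * (gapAfter u 0 ^ 5 + ∑ k, gapAfter u (u k) ^ 5) := by
  set x := orderStatAug n u
  have hmono : MonotoneOn x (Iic (n + 1)) := orderStatAug_monotoneOn hu
  have hx0 : x 0 = 0 := orderStatAug_zero u
  have hxN : x (n + 1) = 1 := orderStatAug_last u
  have hqis : qis Λ n u
      = ∑ i ∈ Finset.range (n + 1), (x (i + 1) - x i) / 2 * (Λ (x i) + Λ (x (i + 1))) := by
    rw [qis, Finset.mul_sum]
    exact Finset.sum_congr rfl fun i _ => by ring
  have htrap := abs_integral_sub_sum_trapezoid_le hmono (hx0 ▸ hxN ▸ hΛ) (hx0 ▸ hxN ▸ hΛd)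
    (hx0 ▸ hxN ▸ hC)
  rw [hx0, hxN, ← hqis] at htrap
  have hspacing : ∀ i ∈ Finset.range (n + 1), 0 ≤ x (i + 1) - x i := fun i hi => by
    have := Finset.mem_range.1 hi
    exact sub_nonneg.2 (hmono (by simp; omega) (by simp; omega) (Nat.le_succ i))
  calc ((∫ s in (0 : ℝ)..1, Λ s) - qis Λ n u) ^ 2
      ≤ (C / 12 * ∑ i ∈ Finset.range (n + 1), (x (i + 1) - x i) ^ 3) ^ 2 := by
        rw [← sq_abs]; exact pow_le_pow_left₀ (abs_nonneg _) htrap 2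
    _ ≤ (C / 12) ^ 2 * ∑ i ∈ Finset.range (n + 1), (x (i + 1) - x i) ^ 5 := by
        rw [mul_pow]
        refine mul_le_mul_of_nonneg_left ?_ (sq_nonneg _)
        simpa only [x, sum_orderStatAug_sub, one_mul] using sq_sum_pow_three_le _ hspacing
    _ ≤ (C / 12) ^ 2 * (gapAfter u 0 ^ 5 + ∑ k, gapAfter u (u k) ^ 5) :=
        mul_le_mul_of_nonneg_left (sum_spacing_pow_le hu 5) (sq_nonneg _)

open Nat in
lemma integral_pow_mul_one_sub_pow (k m : ℕ) :
    ∫ t in (0 : ℝ)..1, t ^ k * (1 - t) ^ m = k ! * m ! / (k + m + 1)! := by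
  induction k generalizing m with
  | zero =>
    simp only [pow_zero, one_mul, factorial_zero, cast_one, zero_add]
    rw [intervalIntegral.integral_comp_sub_left (fun t => t ^ m), integral_pow,
      factorial_succ]
    push_cast
    field_simp
    simp
  | succ k ih =>
    -- `t ^ (k + 1) * (1 - t) ^ (m + 1)` vanishes at both ends
    have hderiv : ∀ t ∈ uIcc (0 : ℝ) 1, HasDerivAt (fun t => t ^ (k + 1) * (1 - t) ^ (m + 1))
        ((k + 1) * (t ^ k * (1 - t) ^ (m + 1)) - (m + 1) * (t ^ (k + 1) * (1 - t) ^ m)) t := by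
      intro t _
      refine ((hasDerivAt_pow (k + 1) t).mul
        (((hasDerivAt_id' t).const_sub 1).pow (m + 1))).congr_deriv ?_
      simp only [Pi.pow_apply]
      push_cast
      ring
    have hint : ∀ p q : ℕ, IntervalIntegrable (fun t : ℝ => t ^ p * (1 - t) ^ q) volume 0 1 :=
      fun p q => (by fun_prop : Continuous fun t : ℝ => t ^ p * (1 - t) ^ q).intervalIntegrable 0 1
    have hparts := intervalIntegral.integral_eq_sub_of_hasDerivAt hderiv
      (((hint k (m + 1)).const_mul _).sub ((hint (k + 1) m).const_mul _))
    rw [intervalIntegral.integral_sub ((hint k (m + 1)).const_mul _)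
      ((hint (k + 1) m).const_mul _), intervalIntegral.integral_const_mul,
      intervalIntegral.integral_const_mul, ih] at hparts
    norm_num at hparts
    rw [← mul_right_inj' (by positivity : ((m : ℝ) + 1) ≠ 0), ← sub_eq_zero.1 hparts,
      show k + (m + 1) + 1 = k + 1 + m + 1 by ring, factorial_succ k, factorial_succ m]
    push_cast
    ring

lemma factorial_mul_factorial_div_factorial_le (k m : ℕ) :
    (k ! * m ! / (k + m + 1)! : ℝ) ≤ k ! / ((m : ℝ) + 1) ^ (k + 1) := by
  have h : m ! * (m + 1) ^ (k + 1) ≤ (k + m + 1)! := by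
    rw [show k + m + 1 = m + (k + 1) by ring]
    exact Nat.factorial_mul_pow_le_factorial
  have hfac : (m ! : ℝ) * (m + 1) ^ (k + 1) ≤ (k + m + 1)! := by exact_mod_cast h
  rw [div_le_div_iff₀ (by positivity) (by positivity), mul_assoc]
  gcongr

lemma lintegral_ofReal_pow_eq_setLIntegral_Ioo {Ω : Type*} [MeasurableSpace Ω] {μ : Measure Ω}
    {X : Ω → ℝ} (hX : AEMeasurable X μ) (h01 : ∀ᵐ ω ∂μ, X ω ∈ Icc (0 : ℝ) 1) (k : ℕ) :
    ∫⁻ ω, ENNReal.ofReal (X ω ^ (k + 1)) ∂μ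
      = ∫⁻ t in Ioo 0 1, μ {ω | t < X ω} * ENNReal.ofReal ((k + 1) * t ^ k) := by
  have hX0 : 0 ≤ᵐ[μ] X := h01.mono fun ω h => h.1
  have hvanish : ∀ t ∈ Ici (1 : ℝ), μ {ω | t < X ω} * ENNReal.ofReal ((k + 1) * t ^ k) = 0 := by
    intro t (ht : 1 ≤ t)
    have : μ {ω | t < X ω} = 0 := by
      refine measure_mono_null ?_ (ae_iff.1 h01)
      intro ω (hω : t < X ω) (h : X ω ∈ Icc 0 1)
      linarith [h.2]
    simp [this]
  calc ∫⁻ ω, ENNReal.ofReal (X ω ^ (k + 1)) ∂μ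
      = ∫⁻ ω, ENNReal.ofReal (∫ t in (0 : ℝ)..X ω, (k + 1) * t ^ k) ∂μ := by
        congr! 3 with ω
        rw [intervalIntegral.integral_const_mul, integral_pow]
        field_simp
        simp
    _ = ∫⁻ t in Ioi 0, μ {ω | t < X ω} * ENNReal.ofReal ((k + 1) * t ^ k) :=
        lintegral_comp_eq_lintegral_meas_lt_mul μ hX0 hX
          (fun _ _ => (by fun_prop : Continuous fun t : ℝ => (k + 1) * t ^ k).intervalIntegrable ..)
          ((ae_restrict_mem measurableSet_Ioi).mono fun t (ht : 0 < t) => by positivity)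
    _ = ∫⁻ t in Ioo 0 1, μ {ω | t < X ω} * ENNReal.ofReal ((k + 1) * t ^ k) := by
        rw [← Ioo_union_Ici_eq_Ioi zero_lt_one, lintegral_union measurableSet_Ici
          ((Iio_disjoint_Ici le_rfl).mono_left Ioo_subset_Iio_self),
          setLIntegral_eq_zero measurableSet_Ici hvanish, add_zero]

lemma integral_pow_le_of_tail_le {Ω : Type*} [MeasurableSpace Ω] {μ : Measure Ω} {X : Ω → ℝ}
    (hX : AEMeasurable X μ) (h01 : ∀ᵐ ω ∂μ, X ω ∈ Icc (0 : ℝ) 1) {m : ℕ}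
    (htail : ∀ t ∈ Ioo (0 : ℝ) 1, μ {ω | t < X ω} ≤ ENNReal.ofReal ((1 - t) ^ m)) (k : ℕ) :
    ∫ ω, X ω ^ (k + 1) ∂μ ≤ (k + 1)! / ((m : ℝ) + 1) ^ (k + 1) := by
  have hbeta_int : IntegrableOn (fun t : ℝ => (k + 1) * t ^ k * (1 - t) ^ m) (Ioo 0 1) :=
    (by fun_prop : Continuous fun t : ℝ => (k + 1) * t ^ k * (1 - t) ^ m).integrableOn_Icc.mono_set
      Ioo_subset_Icc_self
  have hbeta_nonneg : ∀ t ∈ Ioo (0 : ℝ) 1, 0 ≤ (k + 1) * t ^ k * (1 - t) ^ m := fun t ht => by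
    have := ht.1
    have : 0 ≤ 1 - t := by linarith [ht.2]
    positivity
  rw [integral_eq_lintegral_of_nonneg_ae (h01.mono fun ω h => pow_nonneg h.1 _)
    (hX.pow_const _).aestronglyMeasurable, lintegral_ofReal_pow_eq_setLIntegral_Ioo hX h01]
  refine ENNReal.toReal_le_of_le_ofReal (by positivity) ?_
  calc ∫⁻ t in Ioo 0 1, μ {ω | t < X ω} * ENNReal.ofReal ((k + 1) * t ^ k)
      ≤ ∫⁻ t in Ioo 0 1, ENNReal.ofReal ((k + 1) * t ^ k * (1 - t) ^ m) := by
        refine setLIntegral_mono (by fun_prop) fun t ht => ?_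
        rw [mul_comm _ ((1 - t) ^ m), ENNReal.ofReal_mul (pow_nonneg (sub_nonneg.2 ht.2.le) m)]
        gcongr
        exact htail t ht
    _ = ENNReal.ofReal ((k + 1) * (k ! * m ! / (k + m + 1)!)) := by
        rw [← ofReal_integral_eq_lintegral_ofReal hbeta_int
            (ae_restrict_of_forall_mem measurableSet_Ioo hbeta_nonneg),
          ← integral_Ioc_eq_integral_Ioo, ← intervalIntegral.integral_of_le zero_le_one,
          ← integral_pow_mul_one_sub_pow, ← intervalIntegral.integral_const_mul]
        simp only [mul_assoc]
    _ ≤ ENNReal.ofReal ((k + 1)! / ((m : ℝ) + 1) ^ (k + 1)) := by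
        refine ENNReal.ofReal_le_ofReal ?_
        rw [Nat.factorial_succ k, Nat.cast_mul, mul_div_assoc (((k + 1 : ℕ) : ℝ)), Nat.cast_succ]
        exact mul_le_mul_of_nonneg_left (factorial_mul_factorial_div_factorial_le k m)
          (by positivity)

instance : IsProbabilityMeasure (volume.restrict (Icc (0 : ℝ) 1)) :=
  ⟨by simp⟩

instance (n : ℕ) : IsProbabilityMeasure (iidUniform n) := by
  unfold iidUniform; infer_instance

lemma ae_mem_Icc_iidUniform (n : ℕ) : ∀ᵐ u ∂iidUniform n, ∀ k, u k ∈ Icc (0 : ℝ) 1 :=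
  ae_all_iff.2 fun _ => Measure.tendsto_eval_ae_ae.eventually (ae_restrict_mem measurableSet_Icc)

lemma iidUniform_forall_notMem_Ioc (n : ℕ) {t s : ℝ} (ht : 0 ≤ t) (hs : 0 ≤ s)
    (hts : t + s ≤ 1) :
    iidUniform n {w | ∀ j, w j ∉ Ioc t (t + s)} = ENNReal.ofReal ((1 - s) ^ n) := by
  have hIoc : volume.restrict (Icc (0 : ℝ) 1) (Ioc t (t + s)) = ENNReal.ofReal s := by
    rw [Measure.restrict_apply measurableSet_Ioc,
      inter_eq_left.2 (Ioc_subset_Icc_self.trans (Icc_subset_Icc ht hts)), Real.volume_Ioc,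
      add_sub_cancel_left]
  have hset : {w : Fin n → ℝ | ∀ j, w j ∉ Ioc t (t + s)} = univ.pi fun _ => (Ioc t (t + s))ᶜ := by
    ext w; simp
  rw [hset, iidUniform, Measure.pi_pi, Finset.prod_const, Finset.card_univ, Fintype.card_fin,
    prob_compl_eq_one_sub measurableSet_Ioc, hIoc, ← ENNReal.ofReal_one,
    ← ENNReal.ofReal_sub _ hs, ← ENNReal.ofReal_pow (by linarith)]

lemma iidUniform_lt_gapAfter_zero_le (n : ℕ) {s : ℝ} (hs : s ∈ Icc (0 : ℝ) 1) :
    iidUniform n {u | s < gapAfter u 0} ≤ ENNReal.ofReal ((1 - s) ^ n) := by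
  rw [← iidUniform_forall_notMem_Ioc n le_rfl hs.1 (by linarith [hs.2])]
  exact measure_mono fun u hu => (forall_notMem_Ioc_of_lt_gapAfter hu).2

/-- Split off the coordinate `k` (Fubini): given `u k = t`, the gap after `t` exceeds `s` only if
the other `m` points all avoid `(t, t + s]`. -/
lemma iidUniform_lt_gapAfter_self_le {m : ℕ} (k : Fin (m + 1)) {s : ℝ} (hs : 0 ≤ s) :
    iidUniform (m + 1) {u | s < gapAfter u (u k)} ≤ ENNReal.ofReal ((1 - s) ^ m) := by
  set μ₁ := volume.restrict (Icc (0 : ℝ) 1)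
  set B : Set (ℝ × (Fin m → ℝ)) := {p | p.1 + s < 1 ∧ ∀ j, p.2 j ∉ Ioc p.1 (p.1 + s)}
  have hB : MeasurableSet B := by
    simp only [B, ofPred_and, ofPred_forall, mem_Ioc, not_and, not_le]
    measurability
  have hsub : {u : Fin (m + 1) → ℝ | s < gapAfter u (u k)}
      ⊆ MeasurableEquiv.piFinSuccAbove (fun _ => ℝ) k ⁻¹' B := fun u hu =>
    have h := forall_notMem_Ioc_of_lt_gapAfter hu
    ⟨h.1, fun j => h.2 _⟩
  have hslice : ∀ t ∈ Icc (0 : ℝ) 1,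
      Measure.pi (fun _ : Fin m => μ₁) (Prod.mk t ⁻¹' B) ≤ ENNReal.ofReal ((1 - s) ^ m) := by
    intro t ht
    by_cases hts : t + s < 1
    · rw [← iidUniform_forall_notMem_Ioc m ht.1 hs hts.le]
      exact measure_mono fun w hw => hw.2
    · simp [B, hts]
  calc iidUniform (m + 1) {u | s < gapAfter u (u k)}
      ≤ (μ₁.prod (Measure.pi fun _ : Fin m => μ₁)) B := by
        rw [← (measurePreserving_piFinSuccAbove (fun _ => μ₁) k).measure_preimage
          hB.nullMeasurableSet]
        exact measure_mono hsub
    _ = ∫⁻ t, Measure.pi (fun _ : Fin m => μ₁) (Prod.mk t ⁻¹' B) ∂μ₁ := Measure.prod_apply hB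
    _ ≤ ∫⁻ _, ENNReal.ofReal ((1 - s) ^ m) ∂μ₁ :=
        lintegral_mono_ae ((ae_restrict_mem measurableSet_Icc).mono hslice)
    _ = ENNReal.ofReal ((1 - s) ^ m) := by simp

lemma measurable_gapAfter {n : ℕ} {t : (Fin n → ℝ) → ℝ} (ht : Measurable t) :
    Measurable fun u => gapAfter u (t u) := by
  refine Measurable.sub ?_ ht
  suffices ∀ s : Finset (Fin n),
      Measurable fun u : Fin n → ℝ => s.fold min 1 fun k => if t u < u k then u k else 1 from
    this Finset.univ
  intro s
  induction s using Finset.induction_on with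
  | empty => exact measurable_const
  | insert k s hk ih =>
    simp only [Finset.fold_insert hk]
    exact (Measurable.ite (measurableSet_lt ht (measurable_pi_apply k)) (measurable_pi_apply k)
      measurable_const).min ih

lemma integrable_gapAfter_pow {n : ℕ} {t : (Fin n → ℝ) → ℝ} (ht : Measurable t)
    (ht01 : ∀ᵐ u ∂iidUniform n, t u ∈ Icc (0 : ℝ) 1) (p : ℕ) :
    Integrable (fun u => gapAfter u (t u) ^ p) (iidUniform n) := by
  refine Integrable.of_bound ((measurable_gapAfter ht).pow_const p).aestronglyMeasurable 1
    (ht01.mono fun u hu => ?_)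
  have h := gapAfter_mem_Icc u hu
  rw [norm_pow, Real.norm_of_nonneg h.1]
  exact pow_le_one₀ h.1 h.2

lemma integrable_sum_gapAfter_pow (n p : ℕ) :
    Integrable (fun u => gapAfter u 0 ^ p + ∑ k, gapAfter u (u k) ^ p) (iidUniform n) :=
  (integrable_gapAfter_pow measurable_const (ae_of_all _ fun _ => left_mem_Icc.2 zero_le_one) p).add
    (integrable_finsetSum _ fun k _ => integrable_gapAfter_pow (measurable_pi_apply k)
      ((ae_mem_Icc_iidUniform n).mono fun _ hu => hu k) p)

lemma integral_sum_gapAfter_pow_le (m p : ℕ) :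
    ∫ u, (gapAfter u 0 ^ (p + 1) + ∑ k, gapAfter u (u k) ^ (p + 1)) ∂iidUniform (m + 1)
      ≤ (m + 2) * ((p + 1)! / ((m : ℝ) + 1) ^ (p + 1)) := by
  have hae := ae_mem_Icc_iidUniform (m + 1)
  have hmoment {t : (Fin (m + 1) → ℝ) → ℝ} (ht : Measurable t)
      (ht01 : ∀ᵐ u ∂iidUniform (m + 1), t u ∈ Icc (0 : ℝ) 1)
      (htail : ∀ s ∈ Ioo (0 : ℝ) 1,
        iidUniform (m + 1) {u | s < gapAfter u (t u)} ≤ ENNReal.ofReal ((1 - s) ^ m)) :=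
    integral_pow_le_of_tail_le (measurable_gapAfter ht).aemeasurable
      (ht01.mono fun u => gapAfter_mem_Icc u) htail p
  have hzero := hmoment measurable_const (ae_of_all _ fun _ => left_mem_Icc.2 zero_le_one)
    fun s hs => (iidUniform_lt_gapAfter_zero_le (m + 1) (Ioo_subset_Icc_self hs)).trans
      (ENNReal.ofReal_le_ofReal (pow_le_pow_of_le_one (by linarith [hs.2]) (by linarith [hs.1])
        m.le_succ))
  have hself (k : Fin (m + 1)) := hmoment (measurable_pi_apply k) (hae.mono fun _ hu => hu k)
    fun s hs => iidUniform_lt_gapAfter_self_le k hs.1.le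
  have hint0 := integrable_gapAfter_pow measurable_const
    (ae_of_all (iidUniform (m + 1)) fun _ => left_mem_Icc.2 zero_le_one) (p + 1)
  have hint (k : Fin (m + 1)) := integrable_gapAfter_pow (measurable_pi_apply k)
    (hae.mono fun _ hu => hu k) (p + 1)
  rw [integral_add hint0 (integrable_finsetSum _ fun k _ => hint k),
    integral_finsetSum _ fun k _ => hint k]
  set b : ℝ := (p + 1)! / ((m : ℝ) + 1) ^ (p + 1)
  calc _ ≤ b + ∑ _k : Fin (m + 1), b := add_le_add hzero (Finset.sum_le_sum fun k _ => hself k)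
    _ = (m + 2) * b := by simp; ring

/-- if `Λ` is twice differentiable on `[0,1]` with bounded
second derivative there, and `Z = ∫₀^1 Λ`, then there is a constant `M`
(depending only on the bound `C` on `|Λ''|`) such that for all `n ≥ 1`
the QIS estimator satisfies `E[(Z − Ẑ_QIS)²] ≤ M/n⁴`. -/
theorem stmt11 (Λ Λd Λdd : ℝ → ℝ) (C : ℝ)
    (hΛ : ∀ u ∈ Set.Icc (0:ℝ) 1, HasDerivWithinAt Λ (Λd u) (Set.Icc (0:ℝ) 1) u)
    (hΛd : ∀ u ∈ Set.Icc (0:ℝ) 1, HasDerivWithinAt Λd (Λdd u) (Set.Icc (0:ℝ) 1) u)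
    (hC : ∀ u ∈ Set.Icc (0:ℝ) 1, |Λdd u| ≤ C) :
    ∃ M : ℝ, ∀ n : ℕ, 1 ≤ n →
      ∫ u, ((∫ s in (0:ℝ)..1, Λ s) - qis Λ n u) ^ 2 ∂(iidUniform n)
        ≤ M / n ^ 4 := by
  refine ⟨240 * (C / 12) ^ 2, fun n hn => ?_⟩
  obtain ⟨m, rfl⟩ : ∃ m, n = m + 1 := ⟨n - 1, by omega⟩
  calc ∫ u, ((∫ s in (0:ℝ)..1, Λ s) - qis Λ (m + 1) u) ^ 2 ∂iidUniform (m + 1)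
      ≤ ∫ u, (C / 12) ^ 2 * (gapAfter u 0 ^ 5 + ∑ k, gapAfter u (u k) ^ 5) ∂iidUniform (m + 1) :=
        integral_mono_of_nonneg (ae_of_all _ fun _ => sq_nonneg _)
          ((integrable_sum_gapAfter_pow _ 5).const_mul _)
          ((ae_mem_Icc_iidUniform _).mono fun _ hu => sq_integral_sub_qis_le hΛ hΛd hC hu)
    _ ≤ (C / 12) ^ 2 * ((m + 2) * ((4 + 1)! / ((m : ℝ) + 1) ^ (4 + 1))) := by
        rw [integral_const_mul]
        gcongr
        exact integral_sum_gapAfter_pow_le m 4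
    _ ≤ 240 * (C / 12) ^ 2 / ((m + 1 : ℕ) : ℝ) ^ 4 := by
        rw [mul_comm 240, mul_div_assoc]
        gcongr
        have hm : (0 : ℝ) ≤ m := m.cast_nonneg
        rw [mul_div_assoc', div_le_div_iff₀ (by positivity) (by positivity)]
        norm_num [Nat.factorial]
        nlinarith [pow_pos (show (0 : ℝ) < m + 1 by positivity) 4]
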